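/- The function G_{a,b,c}^d(u,w) = Σ_{γ = mτ+n: m ≡ b-a mod k, m ≡ d-c mod l} exp( -(π(k+l)/(2tkl))·(|γ|² + 2·conj(γ)·u + u²) + (2πi/l)((u+n)w₂ - mw₁) + πin((m+2c)/l - (m+2a)/k) ) / (γ + u) satisfies the quasi-periodicity G_{a,b,c}^d(u+1, w) = exp(2πi(b/k - c/l)) · G_{a,b,c}^d(u, w). -/

import Mathlib

open Complex Real

/-- The holomorphic-side triple product generating function `G_{a,b,c}^d(u,w)`,
a sum over lattice points `γ = mτ + n` with `m ≡ b-a (mod k)`, `m ≡ d-c (mod l)`. -/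
noncomputable def Gfun (τ : ℂ) (t : ℝ) (k l : ℕ) (a b c d : ℤ) (w₁ w₂ : ℝ) (u : ℂ) : ℂ :=
  ∑' mn : ℤ × ℤ,
    if (k : ℤ) ∣ (mn.1 - (b - a)) ∧ (l : ℤ) ∣ (mn.1 - (d - c)) then
      Complex.exp (-((π : ℂ) * ((k : ℂ) + l) / (2 * (t : ℂ) * (k : ℂ) * l)) *
          ((Complex.normSq ((mn.1 : ℂ) * τ + (mn.2 : ℂ)) : ℂ)
            + 2 * (starRingEnd ℂ) ((mn.1 : ℂ) * τ + (mn.2 : ℂ)) * u + u ^ 2)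
        + 2 * (π : ℂ) * I / (l : ℂ) * ((u + (mn.2 : ℂ)) * (w₂ : ℂ) - (mn.1 : ℂ) * (w₁ : ℂ))
        + (π : ℂ) * I * (mn.2 : ℂ) *
            (((mn.1 : ℂ) + 2 * (c : ℂ))/(l : ℂ) - ((mn.1 : ℂ) + 2 * (a : ℂ))/(k : ℂ))) /
        ((mn.1 : ℂ) * τ + (mn.2 : ℂ) + u)
    else 0

/-- One summand of `Gfun`. -/
noncomputable def Gterm (τ : ℂ) (t : ℝ) (k l : ℕ) (a b c d : ℤ) (w₁ w₂ : ℝ) (u : ℂ)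
    (mn : ℤ × ℤ) : ℂ :=
  if (k : ℤ) ∣ (mn.1 - (b - a)) ∧ (l : ℤ) ∣ (mn.1 - (d - c)) then
    Complex.exp (-((π : ℂ) * ((k : ℂ) + l) / (2 * (t : ℂ) * (k : ℂ) * l)) *
        ((Complex.normSq ((mn.1 : ℂ) * τ + (mn.2 : ℂ)) : ℂ)
          + 2 * (starRingEnd ℂ) ((mn.1 : ℂ) * τ + (mn.2 : ℂ)) * u + u ^ 2)
      + 2 * (π : ℂ) * I / (l : ℂ) * ((u + (mn.2 : ℂ)) * (w₂ : ℂ) - (mn.1 : ℂ) * (w₁ : ℂ))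
      + (π : ℂ) * I * (mn.2 : ℂ) *
          (((mn.1 : ℂ) + 2 * (c : ℂ))/(l : ℂ) - ((mn.1 : ℂ) + 2 * (a : ℂ))/(k : ℂ))) /
      ((mn.1 : ℂ) * τ + (mn.2 : ℂ) + u)
  else 0

set_option maxHeartbeats 2000000 in
lemma Gterm_shift (τ : ℂ) (t : ℝ) (ht : τ.im = t) (ht0 : (t : ℂ) ≠ 0)
    (k l : ℕ) (hk0 : (k : ℂ) ≠ 0) (hl0 : (l : ℂ) ≠ 0)
    (a b c d : ℤ) (w₁ w₂ : ℝ) (u : ℂ) (mn : ℤ × ℤ) :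
    Gterm τ t k l a b c d w₁ w₂ (u + 1) mn =
      Complex.exp (2 * (π : ℂ) * I * ((b : ℂ)/(k : ℂ) - (c : ℂ)/(l : ℂ))) *
        Gterm τ t k l a b c d w₁ w₂ u (mn.1, mn.2 + 1) := by
  obtain ⟨m, n⟩ := mn
  have hconj : (starRingEnd ℂ) τ = τ - 2 * (t : ℂ) * I := by
    apply Complex.ext <;> simp [ht] <;> ring
  unfold Gterm
  simp only
  by_cases h : (k : ℤ) ∣ (m - (b - a)) ∧ (l : ℤ) ∣ (m - (d - c))
  · rw [if_pos h, if_pos h]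
    obtain ⟨⟨j, hj⟩, -⟩ := h
    have hm : (m : ℂ) = (b : ℂ) - a + k * j := by
      have : m = b - a + k * j := by linarith
      exact_mod_cast this
    have hD : (m : ℂ) * τ + ((n + 1 : ℤ) : ℂ) + u = (m : ℂ) * τ + (n : ℂ) + (u + 1) := by
      push_cast; ring
    rw [hD, ← mul_div_assoc]
    congr 1
    rw [← Complex.exp_add]
    have hE : -((π : ℂ) * ((k : ℂ) + l) / (2 * (t : ℂ) * (k : ℂ) * l)) *
          ((Complex.normSq ((m : ℂ) * τ + (n : ℂ)) : ℂ)
            + 2 * (starRingEnd ℂ) ((m : ℂ) * τ + (n : ℂ)) * (u + 1) + (u + 1) ^ 2)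
        + 2 * (π : ℂ) * I / (l : ℂ) * (((u + 1) + (n : ℂ)) * (w₂ : ℂ) - (m : ℂ) * (w₁ : ℂ))
        + (π : ℂ) * I * (n : ℂ) *
            (((m : ℂ) + 2 * (c : ℂ))/(l : ℂ) - ((m : ℂ) + 2 * (a : ℂ))/(k : ℂ))
      = (2 * (π : ℂ) * I * ((b : ℂ)/(k : ℂ) - (c : ℂ)/(l : ℂ))
        + (-((π : ℂ) * ((k : ℂ) + l) / (2 * (t : ℂ) * (k : ℂ) * l)) *
          ((Complex.normSq ((m : ℂ) * τ + ((n + 1 : ℤ) : ℂ)) : ℂ)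
            + 2 * (starRingEnd ℂ) ((m : ℂ) * τ + ((n + 1 : ℤ) : ℂ)) * u + u ^ 2)
        + 2 * (π : ℂ) * I / (l : ℂ) * ((u + ((n + 1 : ℤ) : ℂ)) * (w₂ : ℂ) - (m : ℂ) * (w₁ : ℂ))
        + (π : ℂ) * I * ((n + 1 : ℤ) : ℂ) *
            (((m : ℂ) + 2 * (c : ℂ))/(l : ℂ) - ((m : ℂ) + 2 * (a : ℂ))/(k : ℂ))))
        + (j : ℂ) * (2 * (π : ℂ) * I) := by
      simp only [← Complex.mul_conj]
      simp only [map_add, map_mul, map_intCast, map_one, hconj]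
      push_cast
      rw [hm]
      have h2 : -((π : ℂ) * ((k : ℂ) + l) / (2 * (t : ℂ) * (k : ℂ) * l)) *
            (-(2 * (t : ℂ) * I * ((b : ℂ) - a + k * j)))
          = (π : ℂ) * I * ((b : ℂ) - a + k * j) / (k : ℂ)
            + (π : ℂ) * I * ((b : ℂ) - a + k * j) / (l : ℂ) := by
        field_simp
        ring
      have h3 : 2 * (π : ℂ) * I * (((b : ℂ) + k * j) / (k : ℂ))
          = 2 * (π : ℂ) * I * ((b : ℂ) / (k : ℂ)) + 2 * (π : ℂ) * I * (j : ℂ) := by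
        field_simp
      linear_combination h2 + h3
    rw [hE, Complex.exp_add, Complex.exp_add, Complex.exp_int_mul_two_pi_mul_I, mul_one]
  · rw [if_neg h, if_neg h, mul_zero]

/-- Quasi-periodicity of `G_{a,b,c}^d` in `u`:
`G(u+1) = exp(2πi(b/k - c/l)) G(u)`. -/
theorem stmt_9
    (τ : ℂ) (t : ℝ) (ht : τ.im = t) (htpos : 0 < t)
    (k l : ℕ) (hk : 0 < k) (hl : 0 < l)
    (a b c d : ℤ) (w₁ w₂ : ℝ)
    (u : ℂ) (hu : u ∉ {z : ℂ | ∃ p q : ℤ, z = (p : ℂ) + (q : ℂ) * τ}) :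
    Gfun τ t k l a b c d w₁ w₂ (u + 1) =
      Complex.exp (2 * (π : ℂ) * I * ((b : ℂ)/(k : ℂ) - (c : ℂ)/(l : ℂ))) *
        Gfun τ t k l a b c d w₁ w₂ u := by
  have ht0 : (t : ℂ) ≠ 0 := by exact_mod_cast htpos.ne'
  have hk0 : (k : ℂ) ≠ 0 := Nat.cast_ne_zero.mpr hk.ne'
  have hl0 : (l : ℂ) ≠ 0 := Nat.cast_ne_zero.mpr hl.ne'
  have hG : ∀ v : ℂ, Gfun τ t k l a b c d w₁ w₂ v
      = ∑' mn : ℤ × ℤ, Gterm τ t k l a b c d w₁ w₂ v mn := fun v => rfl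
  rw [hG, hG]
  calc (∑' mn : ℤ × ℤ, Gterm τ t k l a b c d w₁ w₂ (u + 1) mn)
      = ∑' mn : ℤ × ℤ, Complex.exp (2 * (π : ℂ) * I * ((b : ℂ)/(k : ℂ) - (c : ℂ)/(l : ℂ))) *
          Gterm τ t k l a b c d w₁ w₂ u (mn.1, mn.2 + 1) :=
        tsum_congr fun mn => Gterm_shift τ t ht ht0 k l hk0 hl0 a b c d w₁ w₂ u mn
    _ = Complex.exp (2 * (π : ℂ) * I * ((b : ℂ)/(k : ℂ) - (c : ℂ)/(l : ℂ))) *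
          ∑' mn : ℤ × ℤ, Gterm τ t k l a b c d w₁ w₂ u (mn.1, mn.2 + 1) := tsum_mul_left
    _ = Complex.exp (2 * (π : ℂ) * I * ((b : ℂ)/(k : ℂ) - (c : ℂ)/(l : ℂ))) *
          ∑' mn : ℤ × ℤ, Gterm τ t k l a b c d w₁ w₂ u mn := by
        congr 1
        exact ((Equiv.refl ℤ).prodCongr (Equiv.addRight (1 : ℤ))).tsum_eq
          (Gterm τ t k l a b c d w₁ w₂ u)
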